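/- There exists a biconnected bipartite planar graph G of maximum degree 4 on 10 vertices such that every vertex of G lies in some minimum vertex cover of G, yet evc(G) ≠ mvc(G). -/

import Mathlib

namespace EVC

open SimpleGraph

variable {V : Type*}

/-- `S` is a vertex cover of `G`. -/
def IsVC (G : SimpleGraph V) (S : Set V) : Prop :=
  ∀ ⦃u v : V⦄, G.Adj u v → u ∈ S ∨ v ∈ S

/-- The minimum vertex cover number of `G`. -/
noncomputable def mvc (G : SimpleGraph V) : ℕ :=
  sInf {k | ∃ S : Set V, IsVC G S ∧ S.ncard = k}

/-- The minimum size of a vertex cover of `G` containing all vertices of `U`. -/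
noncomputable def mvcOn (G : SimpleGraph V) (U : Set V) : ℕ :=
  sInf {k | ∃ S : Set V, IsVC G S ∧ U ⊆ S ∧ S.ncard = k}

/-- Configuration `S'` is obtained from configuration `S` by a legal move of the guards
defending an attack on the edge `uv`: each guard stays or moves to an adjacent vertex
(at most one guard per vertex), and some guard moves across the attacked edge `uv`. -/
def Defends (G : SimpleGraph V) (S S' : Set V) (u v : V) : Prop :=
  ∃ f : V → V, Set.BijOn f S S' ∧ (∀ w ∈ S, f w = w ∨ G.Adj w (f w)) ∧
    ((u ∈ S ∧ f u = v) ∨ (v ∈ S ∧ f v = u))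

/-- `C` is an eternal vertex cover class of `G` with `k` guards, each configuration being a
vertex cover of size `k` containing `U`: from each configuration, every attack on an edge
can be defended by a legal move to another configuration in `C`. -/
def IsEvcClassOn (G : SimpleGraph V) (U : Set V) (k : ℕ) (C : Set (Set V)) : Prop :=
  C.Nonempty ∧ (∀ S ∈ C, IsVC G S ∧ U ⊆ S ∧ S.ncard = k) ∧
    ∀ S ∈ C, ∀ u v : V, G.Adj u v → ∃ S' ∈ C, Defends G S S' u v

/-- An eternal vertex cover class with no constraint on occupied vertices. -/
def IsEvcClass (G : SimpleGraph V) (k : ℕ) (C : Set (Set V)) : Prop :=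
  IsEvcClassOn G ∅ k C

/-- `evc_U(G)` : the minimum `k` admitting an eternal vertex cover class all of whose
configurations contain `U`. -/
noncomputable def evcOn (G : SimpleGraph V) (U : Set V) : ℕ :=
  sInf {k | ∃ C : Set (Set V), IsEvcClassOn G U k C}

/-- The eternal vertex cover number of `G`. -/
noncomputable def evc (G : SimpleGraph V) : ℕ := evcOn G ∅

/-- `x` is a cut vertex of the connected graph `G`. -/
def IsCutVertex (G : SimpleGraph V) (x : V) : Prop :=
  G.Connected ∧ ¬ (G.induce {v : V | v ≠ x}).Connected

/-- The set of cut vertices of `G`. -/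
def cutVertices (G : SimpleGraph V) : Set V := {x | IsCutVertex G x}

/-- `G` is locally connected: every open neighborhood induces a connected subgraph. -/
def LocallyConnected (G : SimpleGraph V) : Prop :=
  ∀ v : V, (G.induce (G.neighborSet v)).Connected

end EVC

open EVC SimpleGraph

/-!
A vertex cover of `K_{2,3}` contains one of its two sides, so every vertex cover of `G` has at
least five vertices, and the five-vertex ones are `X`, `Y`, and `{x₄, x₅, y₄, y₅}` together with
`x₁` or `y₁`. With five guards every configuration is one of these four. Defending `x₄y₄` from
`X` sends the guard on `x₄` to `y₄`; the guards on `x₂, x₃` must then leave, since no minimum cover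
containing `y₄` contains them, but they can only go to `y₄` or `y₅`. The same happens from `Y`.
From either of the two other covers, defending `x₂y₄` puts a guard on `x₂`, and `X` is the only
minimum cover containing `x₂`.
-/

namespace EVC

variable {V : Type*} {G : SimpleGraph V}

theorem IsVC.subset_or_subset {S : Set V} (hS : IsVC G S) {P Q : Finset V}
    (hPQ : ∀ p ∈ P, ∀ q ∈ Q, G.Adj p q) : ↑P ⊆ S ∨ ↑Q ⊆ S := by
  by_contra! h
  obtain ⟨p, hpP, hpS⟩ := Set.not_subset.mp h.1
  obtain ⟨q, hqQ, hqS⟩ := Set.not_subset.mp h.2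
  exact (hS (hPQ p hpP q hqQ)).elim hpS hqS

theorem mvc_eq_of_isVC_of_forall_le {k : ℕ} (hex : ∃ S : Set V, IsVC G S ∧ S.ncard = k)
    (hle : ∀ S : Set V, IsVC G S → k ≤ S.ncard) : mvc G = k :=
  IsLeast.csInf_eq ⟨hex, by rintro _ ⟨S, hS, rfl⟩; exact hle S hS⟩

theorem evc_ne_of_forall_not_isEvcClassOn {k : ℕ} (hk : k ≠ 0)
    (h : ∀ C, ¬ IsEvcClassOn G ∅ k C) : evc G ≠ k := by
  intro he
  rcases Set.eq_empty_or_nonempty {k | ∃ C, IsEvcClassOn G ∅ k C} with hE | hne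
  · exact hk (by rw [← he, evc, evcOn, hE, Nat.sInf_empty])
  · obtain ⟨C, hC⟩ : ∃ C, IsEvcClassOn G ∅ k C := he ▸ Nat.sInf_mem hne
    exact h C hC

section Defends

variable {u v : V}

theorem Defends.exists_bijOn_of_not_mem {S T : Set V} (h : Defends G S T u v) (hv : v ∉ S) :
    ∃ f : V → V, Set.BijOn f S T ∧ (∀ w ∈ S, f w = w ∨ G.Adj w (f w)) ∧ f u = v := by
  obtain ⟨f, hbij, hmove, ⟨-, hfu⟩ | ⟨hvS, -⟩⟩ := h
  · exact ⟨f, hbij, hmove, hfu⟩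
  · exact absurd hvS hv

theorem Defends.mem_of_mem_of_not_mem {S T : Set V} (h : Defends G S T u v) (hu : u ∈ S)
    (hv : v ∉ S) : v ∈ T := by
  obtain ⟨f, hbij, -, hfu⟩ := h.exists_bijOn_of_not_mem hv
  exact hfu ▸ hbij.mapsTo hu

def oneMoveTargets [DecidableEq V] (G : SimpleGraph V) [DecidableRel G.Adj] (A T : Finset V) :
    Finset V :=
  T.filter fun z => ∃ w ∈ A, z = w ∨ G.Adj w z

/-- Hall's condition for the guards other than the one crossing `uv`. -/
theorem Defends.card_le_card_oneMoveTargets [DecidableEq V] [DecidableRel G.Adj]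
    {S T : Finset V} (h : Defends G S T u v) (hu : u ∈ S) (hv : v ∉ S) {A : Finset V}
    (hA : A ⊆ S.erase u) :
    A.card ≤ (oneMoveTargets G A (T.erase v)).card := by
  obtain ⟨f, hbij, hmove, hfu⟩ := h.exists_bijOn_of_not_mem hv
  have hAS : ∀ w ∈ A, w ∈ S := fun w hw => Finset.mem_of_mem_erase (hA hw)
  refine Finset.card_le_card_of_injOn f (fun w hw => ?_)
    (hbij.injOn.mono fun w hw => hAS w hw)
  have hfw : f w ≠ v := fun hfw =>
    Finset.ne_of_mem_erase (hA hw) (hbij.injOn (hAS w hw) hu (hfw.trans hfu.symm))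
  simp only [oneMoveTargets, Finset.coe_filter, Finset.mem_erase]
  exact ⟨⟨hfw, hbij.mapsTo (hAS w hw)⟩, w, hw, hmove w (hAS w hw)⟩

end Defends

section BallFinset

variable {W : Type*} [Fintype W] [DecidableEq W] (H : SimpleGraph W) [DecidableRel H.Adj]

def ballFinset (v : W) : ℕ → Finset W
  | 0 => {v}
  | n + 1 => ballFinset v n ∪ Finset.univ.filter fun w => ∃ u ∈ ballFinset v n, H.Adj u w

theorem reachable_of_mem_ballFinset {v w : W} {n : ℕ} (hw : w ∈ ballFinset H v n) :
    H.Reachable v w := by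
  induction n generalizing w with
  | zero => exact (Finset.mem_singleton.mp hw).symm ▸ Reachable.refl v
  | succ n ih =>
    simp only [ballFinset, Finset.mem_union, Finset.mem_filter] at hw
    rcases hw with hw | ⟨-, u, hu, hadj⟩
    · exact ih hw
    · exact (ih hu).trans hadj.reachable

theorem connected_of_ballFinset_eq_univ {v : W} {n : ℕ} (h : ballFinset H v n = Finset.univ) :
    H.Connected :=
  (connected_iff_exists_forall_reachable H).mpr
    ⟨v, fun w => reachable_of_mem_ballFinset H (h ▸ Finset.mem_univ w)⟩

end BallFinset

end EVC

/-- Vertices `0, …, 4` are `x₁, …, x₅` and `5, …, 9` are `y₁, …, y₅`. -/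
def twinK23 : SimpleGraph (Fin 10) := SimpleGraph.fromRel fun u v =>
  (u ∈ ({0, 1, 2} : Finset (Fin 10)) ∧ v ∈ ({8, 9} : Finset (Fin 10))) ∨
    (u ∈ ({5, 6, 7} : Finset (Fin 10)) ∧ v ∈ ({3, 4} : Finset (Fin 10))) ∨
    (u = 0 ∧ v = 5) ∨ (u = 3 ∧ v = 8)

instance : DecidableRel twinK23.Adj := fun u v =>
  inferInstanceAs (Decidable (u ≠ v ∧ (_ ∨ _)))

namespace twinK23

def partX : Finset (Fin 10) := {0, 1, 2, 3, 4}
def partY : Finset (Fin 10) := {5, 6, 7, 8, 9}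
def coverX₁ : Finset (Fin 10) := {0, 3, 4, 8, 9}
def coverY₁ : Finset (Fin 10) := {5, 3, 4, 8, 9}

def minimumCovers : List (Finset (Fin 10)) := [partX, partY, coverX₁, coverY₁]

def minimalCovers : List (Finset (Fin 10)) :=
  minimumCovers ++ [{0, 1, 2, 3, 5, 6, 7}, {0, 1, 2, 5, 6, 7, 8}]

theorem isVC_of_mem_minimalCovers {F : Finset (Fin 10)} (hF : F ∈ minimalCovers) :
    IsVC twinK23 ↑F := by
  have : ∀ F ∈ minimalCovers, ∀ u v, twinK23.Adj u v → u ∈ F ∨ v ∈ F := by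
    decide +kernel
  exact fun u v => this F hF u v

theorem card_of_mem_minimalCovers {F : Finset (Fin 10)} (hF : F ∈ minimalCovers) :
    5 ≤ F.card ∧ (F.card ≤ 5 → F ∈ minimumCovers) := by
  have : ∀ F ∈ minimalCovers, 5 ≤ F.card ∧ (F.card ≤ 5 → F ∈ minimumCovers) := by
    decide +kernel
  exact this F hF

theorem exists_minimalCover_subset {S : Set (Fin 10)} (hS : IsVC twinK23 S) :
    ∃ F ∈ minimalCovers, ↑F ⊆ S := by
  have h₁ := hS.subset_or_subset (P := {0, 1, 2}) (Q := {8, 9}) (by decide)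
  have h₂ := hS.subset_or_subset (P := {5, 6, 7}) (Q := {3, 4}) (by decide)
  have h₃ : (0 : Fin 10) ∈ S ∨ (5 : Fin 10) ∈ S := hS (by decide)
  have h₄ : (3 : Fin 10) ∈ S ∨ (8 : Fin 10) ∈ S := hS (by decide)
  simp only [Finset.coe_insert, Finset.coe_singleton, Set.insert_subset_iff,
    Set.singleton_subset_iff] at h₁ h₂
  simp only [minimalCovers, minimumCovers, List.cons_append, List.nil_append, List.mem_cons,
    List.not_mem_nil, exists_eq_or_imp, exists_eq_left, or_false, partX, partY, coverX₁,
    coverY₁, Finset.coe_insert, Finset.coe_singleton, Set.insert_subset_iff,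
    Set.singleton_subset_iff]
  rcases h₁ with ⟨_, _, _⟩ | ⟨_, _⟩ <;> rcases h₂ with ⟨_, _, _⟩ | ⟨_, _⟩ <;>
    rcases h₃ with _ | _ <;> rcases h₄ with _ | _ <;>
    simp only [*, true_and, and_true, true_or, or_true]

theorem five_le_ncard_of_isVC {S : Set (Fin 10)} (hS : IsVC twinK23 S) : 5 ≤ S.ncard := by
  obtain ⟨F, hF, hFS⟩ := exists_minimalCover_subset hS
  calc 5 ≤ F.card := (card_of_mem_minimalCovers hF).1
    _ = (↑F : Set (Fin 10)).ncard := (Set.ncard_coe_finset F).symm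
    _ ≤ S.ncard := Set.ncard_le_ncard hFS

theorem mvc_eq : mvc twinK23 = 5 :=
  mvc_eq_of_isVC_of_forall_le
    ⟨↑partX, isVC_of_mem_minimalCovers (by decide), Set.ncard_coe_finset _⟩
    fun _ => five_le_ncard_of_isVC

theorem ncard_eq_mvc_of_mem_minimumCovers {F : Finset (Fin 10)} (hF : F ∈ minimumCovers) :
    (↑F : Set (Fin 10)).ncard = mvc twinK23 := by
  have : ∀ F ∈ minimumCovers, F.card = 5 := by decide +kernel
  rw [Set.ncard_coe_finset, this F hF, mvc_eq]

theorem exists_eq_minimumCover {S : Set (Fin 10)} (hS : IsVC twinK23 S) (h5 : S.ncard = 5) :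
    ∃ F ∈ minimumCovers, S = ↑F := by
  obtain ⟨F, hF, hFS⟩ := exists_minimalCover_subset hS
  have hFcard : F.card ≤ 5 := by
    rw [← h5, ← Set.ncard_coe_finset]
    exact Set.ncard_le_ncard hFS
  refine ⟨F, (card_of_mem_minimalCovers hF).2 hFcard, ?_⟩
  refine (Set.eq_of_subset_of_ncard_le hFS ?_).symm
  rw [h5, Set.ncard_coe_finset]
  exact (card_of_mem_minimalCovers hF).1

theorem not_isEvcClassOn_five (C : Set (Set (Fin 10))) : ¬ IsEvcClassOn twinK23 ∅ 5 C := by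
  rintro ⟨⟨S₀, hS₀⟩, hcover, hdefend⟩
  have hC : ∀ S ∈ C, ∃ F ∈ minimumCovers, S = ↑F := fun S hS =>
    exists_eq_minimumCover (hcover S hS).1 (hcover S hS).2.2
  have attack : ∀ F : Finset (Fin 10), ↑F ∈ C → ∀ u v, twinK23.Adj u v →
      ∃ T ∈ minimumCovers, ↑T ∈ C ∧ Defends twinK23 ↑F ↑T u v := by
    intro F hF u v huv
    obtain ⟨S', hS', hD⟩ := hdefend _ hF u v huv
    obtain ⟨T, hT, rfl⟩ := hC S' hS'
    exact ⟨T, hT, hS', hD⟩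
  have hX : ↑partX ∉ C := by
    intro hX
    obtain ⟨T, hT, -, hD⟩ := attack partX hX 3 8 (by decide)
    have hHall :=
      hD.card_le_card_oneMoveTargets (by decide) (by decide) (A := {1, 2}) (by decide)
    have : ∀ T ∈ minimumCovers, 8 ∈ T →
        (oneMoveTargets twinK23 {1, 2} (T.erase 8)).card < 2 := by
      decide +kernel
    exact (this T hT (hD.mem_of_mem_of_not_mem (by decide) (by decide))).not_ge hHall
  have hY : ↑partY ∉ C := by
    intro hY
    obtain ⟨T, hT, -, hD⟩ := attack partY hY 8 3 (by decide)
    have hHall :=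
      hD.card_le_card_oneMoveTargets (by decide) (by decide) (A := {6, 7}) (by decide)
    have : ∀ T ∈ minimumCovers, 3 ∈ T →
        (oneMoveTargets twinK23 {6, 7} (T.erase 3)).card < 2 := by
      decide +kernel
    exact (this T hT (hD.mem_of_mem_of_not_mem (by decide) (by decide))).not_ge hHall
  have hMixed : ∀ F ∈ minimumCovers, ↑F ∈ C → F = partX ∨ F = partY := by
    intro F hF hFC
    have hcases : ∀ F ∈ minimumCovers, F = partX ∨ F = partY ∨ (8 ∈ F ∧ 1 ∉ F) := by
      decide +kernel
    obtain hF | hF | ⟨h8, h1⟩ := hcases F hF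
    · exact .inl hF
    · exact .inr hF
    obtain ⟨T, hT, hTC, hD⟩ := attack F hFC 8 1 (by decide)
    have : ∀ T ∈ minimumCovers, 1 ∈ T → T = partX := by decide +kernel
    exact absurd (this T hT (hD.mem_of_mem_of_not_mem h8 h1) ▸ hTC) hX
  obtain ⟨F, hF, rfl⟩ := hC S₀ hS₀
  rcases hMixed F hF hS₀ with rfl | rfl
  exacts [hX hS₀, hY hS₀]

theorem evc_ne_five : evc twinK23 ≠ 5 :=
  evc_ne_of_forall_not_isEvcClassOn (by norm_num) not_isEvcClassOn_five

theorem connected : twinK23.Connected :=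
  connected_of_ballFinset_eq_univ _ (v := 0) (n := 9) (by decide +kernel)

theorem connected_induce_ne (x : Fin 10) : (twinK23.induce {v | v ≠ x}).Connected := by
  fin_cases x
  · exact connected_of_ballFinset_eq_univ _ (v := ⟨1, by decide⟩) (n := 9) (by decide +kernel)
  all_goals
    exact connected_of_ballFinset_eq_univ _ (v := ⟨0, by decide⟩) (n := 9) (by decide +kernel)

theorem colorable_two : twinK23.Colorable 2 :=
  ⟨Coloring.mk (fun v => if v.val < 5 then 0 else 1) fun {u v} => by revert u v; decide⟩

theorem ncard_neighborSet_le_four (w : Fin 10) : (twinK23.neighborSet w).ncard ≤ 4 := by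
  rw [Set.ncard_eq_toFinset_card']
  revert w
  decide

theorem exists_minimumCover_mem (w : Fin 10) : ∃ F ∈ minimumCovers, w ∈ F := by
  revert w
  decide +kernel

end twinK23

/-- There is a biconnected bipartite (planar) graph on 10 vertices with
maximum degree 4 in which every vertex lies in some minimum vertex cover, yet
`evc G ≠ mvc G`. -/
theorem exists_biconnected_bipartite_counterexample :
    ∃ G : SimpleGraph (Fin 10),
      G.Connected ∧ (∀ x : Fin 10, ¬ IsCutVertex G x) ∧ G.Colorable 2 ∧
      (∀ w : Fin 10, (G.neighborSet w).ncard ≤ 4) ∧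
      (∀ w : Fin 10, ∃ S : Set (Fin 10), IsVC G S ∧ S.ncard = mvc G ∧ w ∈ S) ∧
      evc G ≠ mvc G := by
  refine ⟨twinK23, twinK23.connected, fun x hx => hx.2 (twinK23.connected_induce_ne x),
    twinK23.colorable_two, twinK23.ncard_neighborSet_le_four, fun w => ?_, ?_⟩
  · obtain ⟨F, hF, hw⟩ := twinK23.exists_minimumCover_mem w
    exact ⟨↑F, twinK23.isVC_of_mem_minimalCovers (List.mem_append_left _ hF),
      twinK23.ncard_eq_mvc_of_mem_minimumCovers hF, hw⟩
  · rw [twinK23.mvc_eq]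
    exact twinK23.evc_ne_five
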